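/- Let n > 1 be odd. Then the number of ordered pairs (k, ℓ) of elements of ZMod n with k ≠ ℓ such that the graph F_k ⊔ F_ℓ contains a Hamiltonian path equals n * φ(n). (Hence the near-one-factorization {F_k : k ∈ ZMod n} of the complete graph K_n has n·φ(n)/2 perfect (unordered) pairs, so c(K_n) ≥ n·φ(n)/2.) -/

import Mathlib

/-- For `n ≥ 1` and `k : ZMod n`, the graph `F k` on vertex set `ZMod n`
in which distinct vertices `i` and `j` are adjacent iff `i + j = k`. -/
def F (n : ℕ) (k : ZMod n) : SimpleGraph (ZMod n) where
  Adj i j := i ≠ j ∧ i + j = k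
  symm := ⟨fun i j ⟨h1, h2⟩ => ⟨h1.symm, by rwa [add_comm]⟩⟩
  loopless := ⟨fun i ⟨h, _⟩ => h rfl⟩

/-- A graph has a Hamiltonian path if some walk in it is a Hamiltonian path. -/
def HasHamiltonianPath {V : Type*} [DecidableEq V] (G : SimpleGraph V) : Prop :=
  ∃ (a b : V) (p : G.Walk a b), p.IsHamiltonian

/-!
Write `d = l - k`. The two involutions `i ↦ k - i` and `i ↦ l - i` whose graphs make up
`F k ⊔ F l` compose to the translation by `d`.

If `d` is a unit, start at the midpoint `c` with `c + c = k` (a loop of `F k`, hence an end of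
the path) and alternate between the two involutions: `c, c + d, c - d, c + 2d, c - 2d, …`.
For odd `n` these are `n` distinct vertices, so the walk is a Hamiltonian path.

If `d` is not a unit, work modulo the proper ideal `(d)`: there both involutions agree, so
`(2i - k)²` is constant along edges, while it takes both values `0` and `1`; hence the graph is
not even connected. Counting the pairs with `l - k` a unit gives `n φ(n)`.
-/

open SimpleGraph

namespace SimpleGraph

variable {V : Type*} {G : SimpleGraph V}

theorem Walk.apply_eq_of_forall_adj {W : Type*} {f : V → W}
    (hf : ∀ u v, G.Adj u v → f u = f v) : ∀ {a b : V}, G.Walk a b → f a = f b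
  | _, _, .nil => rfl
  | _, _, .cons h p => (hf _ _ h).trans (p.apply_eq_of_forall_adj hf)

theorem Walk.IsHamiltonian.apply_eq_of_forall_adj [DecidableEq V] {W : Type*} {f : V → W}
    {a b : V} {p : G.Walk a b} (hp : p.IsHamiltonian) (hf : ∀ u v, G.Adj u v → f u = f v)
    (u v : V) : f u = f v :=
  ((p.takeUntil u (hp.mem_support u)).apply_eq_of_forall_adj hf).symm.trans
    ((p.takeUntil v (hp.mem_support v)).apply_eq_of_forall_adj hf)

end SimpleGraph

theorem hasHamiltonianPath_of_injOn {V : Type*} [Fintype V] [DecidableEq V] [Nonempty V]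
    {G : SimpleGraph V} (f : ℕ → V)
    (hadj : ∀ i, i + 1 < Fintype.card V → G.Adj (f i) (f (i + 1)))
    (hinj : Set.InjOn f (Set.Iio (Fintype.card V))) : HasHamiltonianPath G := by
  set l := (List.range (Fintype.card V)).map f
  have hne : l ≠ [] := by simp [l, Fintype.card_ne_zero]
  have hchain : l.IsChain G.Adj :=
    (List.isChain_map f).2 ((List.isChain_range _ _).2 fun i hi => hadj i (by omega))
  have hnodup : l.Nodup :=
    List.nodup_range.map_on fun x hx y hy => hinj (List.mem_range.1 hx) (List.mem_range.1 hy)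
  have hmem : ∀ v, v ∈ l := by
    have : l.toFinset = Finset.univ :=
      Finset.eq_univ_of_card _ (by simp [List.toFinset_card_of_nodup hnodup, l])
    simp [← List.mem_toFinset, this]
  refine ⟨_, _, Walk.ofSupport l hne hchain, fun v => ?_⟩
  rw [Walk.support_ofSupport]
  exact List.count_eq_one_of_mem hnodup (hmem v)

theorem Nat.card_isUnit_sub {R : Type*} [Ring R] :
    Nat.card {p : R × R // IsUnit (p.2 - p.1)} = Nat.card R * Nat.card Rˣ := by
  let e : {p : R × R // IsUnit (p.2 - p.1)} ≃ R × Rˣ :=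
    { toFun p := (p.1.1, p.2.unit)
      invFun q := ⟨(q.1, q.1 + q.2), by simp⟩
      left_inv := fun ⟨_, h⟩ => Subtype.ext (by simp)
      right_inv := fun _ => Prod.ext rfl (Units.ext (by simp)) }
  rw [Nat.card_congr e, Nat.card_prod]

/-- The exponents `0, 1, -1, 2, -2, …` of the zig-zag path. -/
def zigzag (i : ℕ) : ℤ := if i % 2 = 0 then -((i / 2 : ℕ) : ℤ) else (i / 2 : ℕ) + 1

theorem zigzag_add_zigzag_succ (i : ℕ) :
    zigzag i + zigzag (i + 1) = if i % 2 = 0 then 1 else 0 := by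
  unfold zigzag; split_ifs <;> omega

theorem zigzag_injOn {n : ℕ} (hodd : Odd n) :
    Set.InjOn (fun i => (zigzag i : ZMod n)) (Set.Iio n) := by
  intro i hi j hj h
  simp only [Set.mem_Iio] at hi hj
  have hn := Nat.odd_iff.1 hodd
  have hdvd : (n : ℤ) ∣ zigzag i - zigzag j := (ZMod.intCast_eq_intCast_iff_dvd_sub _ _ _).1 h.symm
  have hzero : zigzag i - zigzag j = 0 :=
    Int.eq_zero_of_abs_lt_dvd hdvd (by rw [abs_lt]; unfold zigzag; split_ifs <;> omega)
  unfold zigzag at hzero; split_ifs at hzero <;> omega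

namespace ZMod

variable {n : ℕ}

theorem exists_add_self_eq (hodd : Odd n) (k : ZMod n) : ∃ c, c + c = k := by
  obtain ⟨m, rfl⟩ := hodd
  refine ⟨(m + 1) * k, ?_⟩
  have hzero : ((2 * m + 1 : ℕ) : ZMod (2 * m + 1)) = 0 := ZMod.natCast_self _
  push_cast at hzero
  linear_combination k * hzero

end ZMod

section

variable {n : ℕ}

theorem F_adj {k i j : ZMod n} : (F n k).Adj i j ↔ i ≠ j ∧ i + j = k := Iff.rfl

theorem hasHamiltonianPath_of_isUnit_sub (hodd : Odd n) {k l : ZMod n} (hd : IsUnit (l - k)) :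
    HasHamiltonianPath (F n k ⊔ F n l) := by
  have : NeZero n := ⟨hodd.pos.ne'⟩
  obtain ⟨c, hc⟩ := ZMod.exists_add_self_eq hodd k
  set v : ℕ → ZMod n := fun i => c + zigzag i * (l - k)
  have hinj : Set.InjOn v (Set.Iio n) := fun i hi j hj h =>
    zigzag_injOn hodd hi hj (hd.mul_left_inj.1 (add_left_cancel h))
  refine hasHamiltonianPath_of_injOn v (fun i hi => ?_) (by rwa [ZMod.card])
  rw [ZMod.card] at hi
  have hne : v i ≠ v (i + 1) := fun h => by
    have := hinj (Set.mem_Iio.2 (by omega)) (Set.mem_Iio.2 hi) h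
    omega
  have hsum : v i + v (i + 1) = k + ((zigzag i + zigzag (i + 1) : ℤ) : ZMod n) * (l - k) := by
    simp only [v]; push_cast; linear_combination hc
  rw [zigzag_add_zigzag_succ] at hsum
  rw [sup_adj, F_adj, F_adj]
  split_ifs at hsum
  · exact Or.inr ⟨hne, by rw [hsum]; push_cast; ring⟩
  · exact Or.inl ⟨hne, by rw [hsum]; push_cast; ring⟩

theorem isUnit_sub_of_hasHamiltonianPath (hodd : Odd n) {k l : ZMod n}
    (h : HasHamiltonianPath (F n k ⊔ F n l)) : IsUnit (l - k) := by
  by_contra hd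
  set I := Ideal.span {l - k}
  have h01 : (0 : ZMod n ⧸ I) ≠ 1 :=
    Ideal.Quotient.zero_ne_one_iff.2 (by rwa [ne_eq, Ideal.span_singleton_eq_top])
  let π := Ideal.Quotient.mk I
  have hl : π l = π k := by
    rw [← sub_eq_zero, ← map_sub, Ideal.Quotient.eq_zero_iff_mem]
    exact Ideal.mem_span_singleton_self _
  -- modulo `I` every edge is `i + j = k`, so it negates `2i - k`
  let ψ : ZMod n → ZMod n ⧸ I := fun i => π (i + i - k) ^ 2
  have hψ : ∀ i j, (F n k ⊔ F n l).Adj i j → ψ i = ψ j := by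
    intro i j hij
    have hsum : π i + π j = π k := by
      rw [← map_add]
      rcases hij with ⟨-, hij⟩ | ⟨-, hij⟩ <;> simp [hij, hl]
    have hneg : π (j + j - k) = -π (i + i - k) := by
      simp only [map_sub, map_add]; linear_combination 2 * hsum
    simp only [ψ, hneg, neg_sq]
  obtain ⟨_, _, _, hp⟩ := h
  obtain ⟨c₀, hc₀⟩ := ZMod.exists_add_self_eq hodd k
  obtain ⟨c₁, hc₁⟩ := ZMod.exists_add_self_eq hodd (k + 1)
  have := hp.apply_eq_of_forall_adj hψ c₀ c₁
  simp only [ψ, hc₀, hc₁, sub_self, add_sub_cancel_left, map_zero, map_one] at this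
  exact h01 (by simpa using this)

theorem hasHamiltonianPath_sup_F_iff (hodd : Odd n) (k l : ZMod n) :
    HasHamiltonianPath (F n k ⊔ F n l) ↔ IsUnit (l - k) :=
  ⟨isUnit_sub_of_hasHamiltonianPath hodd, hasHamiltonianPath_of_isUnit_sub hodd⟩

end

theorem stmt_9 (n : ℕ) (hn : 1 < n) (hodd : Odd n) :
    Nat.card {p : ZMod n × ZMod n //
        p.1 ≠ p.2 ∧ HasHamiltonianPath (F n p.1 ⊔ F n p.2)} =
      n * Nat.totient n := by
  have : Fact (1 < n) := ⟨hn⟩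
  have hpairs : ∀ p : ZMod n × ZMod n,
      (p.1 ≠ p.2 ∧ HasHamiltonianPath (F n p.1 ⊔ F n p.2)) ↔ IsUnit (p.2 - p.1) := fun p => by
    rw [hasHamiltonianPath_sup_F_iff hodd]
    exact ⟨And.right, fun hu => ⟨fun h => by simp [h] at hu, hu⟩⟩
  rw [Nat.card_congr (Equiv.subtypeEquivRight hpairs), Nat.card_isUnit_sub, Nat.card_zmod,
    Nat.card_eq_fintype_card, ZMod.card_units_eq_totient]
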